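/- arXiv:1810.04460 — 2 statements merged into one kernel-verified Lean document; each statement's English description precedes it below -/
import Mathlib

section
/- Every entry of P^{⊗t} equals either 2^{−t} or −2^{−t}, and in each row of P^{⊗t} exactly (4^t + 2^t)/2 entries are positive and exactly (4^t − 2^t)/2 entries are negative. -/
/-! Every entry of `P` is `±1/2` and every row of `P` sums to `1`. Both properties pass to the
Kronecker power: entries of `P^{⊗t}` are products of `t` entries of `P`, so they are `±2^{-t}`,
and its row sums factor as products of row sums of `P`. A row of `4^t` entries `±2^{-t}` summing
to `1` has exactly `2^t` more positive than negative entries. -/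

open Matrix Finset

noncomputable def P : Matrix (Fin 4) (Fin 4) ℝ :=
  (1/2 : ℝ) • !![1, 1, -1, 1; 1, 1, 1, -1; -1, 1, 1, 1; 1, -1, 1, 1]

/-- The t-fold Kronecker power of `P`. -/
noncomputable def Pt (t : ℕ) : Matrix (Fin t → Fin 4) (Fin t → Fin 4) ℝ :=
  fun i j => ∏ s, P (i s) (j s)

lemma neg_iff_not_pos_of_abs_eq {x c : ℝ} (hx : |x| = c) (hc : 0 < c) : x < 0 ↔ ¬ 0 < x :=
  (not_lt.trans (abs_pos.mp (hx ▸ hc)).le_iff_lt).symm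

section SignCount

variable {ι : Type*} [Fintype ι] {f : ι → ℝ} {c : ℝ}

lemma filter_not_pos_eq_filter_neg (hf : ∀ j, |f j| = c) (hc : 0 < c) :
    univ.filter (fun j => ¬ 0 < f j) = univ.filter (fun j => f j < 0) :=
  filter_congr fun j _ => (neg_iff_not_pos_of_abs_eq (hf j) hc).symm

lemma sum_eq_mul_card_pos_sub_card_neg (hf : ∀ j, |f j| = c) (hc : 0 < c) :
    ∑ j, f j = c * (#{j | 0 < f j} - #{j | f j < 0} : ℝ) := by
  rw [← sum_filter_add_sum_filter_not univ (fun j => 0 < f j), filter_not_pos_eq_filter_neg hf hc,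
    sum_congr rfl fun j hj => (abs_of_pos (mem_filter.mp hj).2).symm.trans (hf j),
    sum_congr rfl fun j hj => neg_eq_iff_eq_neg.mp
      ((abs_of_neg (mem_filter.mp hj).2).symm.trans (hf j))]
  simp only [sum_const, nsmul_eq_mul]
  ring

lemma card_pos_add_card_neg (hf : ∀ j, |f j| = c) (hc : 0 < c) :
    #{j | 0 < f j} + #{j | f j < 0} = Fintype.card ι := by
  rw [← filter_not_pos_eq_filter_neg hf hc]
  exact card_filter_add_card_filter_not _

lemma card_pos_eq_card_neg_add {m : ℕ} (hf : ∀ j, |f j| = c) (hc : 0 < c)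
    (hsum : ∑ j, f j = c * m) : #{j | 0 < f j} = #{j | f j < 0} + m := by
  rw [sum_eq_mul_card_pos_sub_card_neg hf hc] at hsum
  exact_mod_cast sub_eq_iff_eq_add'.mp (mul_left_cancel₀ hc.ne' hsum)

end SignCount

lemma abs_P_apply (a b : Fin 4) : |P a b| = 2⁻¹ := by
  fin_cases a <;> fin_cases b <;> norm_num [P]

lemma sum_P_apply (a : Fin 4) : ∑ b, P a b = 1 := by
  fin_cases a <;> norm_num [P, Fin.sum_univ_four, cons_val_two, cons_val_three]

lemma abs_Pt_apply (t : ℕ) (i j : Fin t → Fin 4) : |Pt t i j| = (2:ℝ)⁻¹ ^ t := by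
  simp [Pt, Finset.abs_prod, abs_P_apply]

lemma sum_Pt_apply (t : ℕ) (i : Fin t → Fin 4) : ∑ j, Pt t i j = 1 := by
  simp only [Pt, ← Fintype.prod_sum fun s b => P (i s) b, sum_P_apply, prod_const_one]

/-- Every entry of `P^{⊗t}` is `±2^{-t}`, and each row has exactly
`(4^t + 2^t)/2` positive entries and `(4^t − 2^t)/2` negative entries. -/
theorem Pt_entries_and_row_sign_count (t : ℕ) :
    (∀ i j, Pt t i j = (2:ℝ)⁻¹ ^ t ∨ Pt t i j = -(2:ℝ)⁻¹ ^ t) ∧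
    (∀ i, (univ.filter (fun j => 0 < Pt t i j)).card = (4 ^ t + 2 ^ t) / 2) ∧
    (∀ i, (univ.filter (fun j => Pt t i j < 0)).card = (4 ^ t - 2 ^ t) / 2) := by
  have hc : (0:ℝ) < 2⁻¹ ^ t := by positivity
  refine ⟨fun i j => (abs_eq hc.le).mp (abs_Pt_apply t i j), ?_⟩
  have hrow (i : Fin t → Fin 4) :
      #{j | 0 < Pt t i j} = #{j | Pt t i j < 0} + 2 ^ t ∧
      #{j | 0 < Pt t i j} + #{j | Pt t i j < 0} = 4 ^ t := by
    have hsum : ∑ j, Pt t i j = 2⁻¹ ^ t * ((2 ^ t : ℕ) : ℝ) := by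
      rw [sum_Pt_apply, Nat.cast_pow, ← mul_pow]
      norm_num
    refine ⟨card_pos_eq_card_neg_add (abs_Pt_apply t i) hc hsum, ?_⟩
    rw [card_pos_add_card_neg (abs_Pt_apply t i) hc, Fintype.card_fun, Fintype.card_fin,
      Fintype.card_fin]
  exact ⟨fun i => by have := hrow i; omega, fun i => by have := hrow i; omega⟩
end

section
/- For every column c of P^{⊗2}, the set of 6 rows in which column c has a negative entry, viewed as a 6-element set of indices in {0,1,2,3}², coincides with one of the 16 sets S₀,…,S₁₅ listed in Theorem 3 of the paper; in particular, the union over all columns of these negative-row index sets consists of exactly 16 distinct 6-element subsets of {0,1,2,3}². -/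
open Matrix Finset

/-- The Kronecker square `P^{⊗2}`, indexed by pairs in `{0,1,2,3}²`. -/
noncomputable def P2 : Matrix (Fin 4 × Fin 4) (Fin 4 × Fin 4) ℝ :=
  fun i j => P i.1 j.1 * P i.2 j.2

/-- The set of rows in which column `c` of `P^{⊗2}` has a negative entry. -/
noncomputable def negRows (c : Fin 4 × Fin 4) : Finset (Fin 4 × Fin 4) :=
  univ.filter (fun r => P2 r c < 0)

/-- The 16 six-element subsets `S₀,…,S₁₅` of `{0,1,2,3}²` from Theorem 3. -/
def S : Fin 16 → Finset (Fin 4 × Fin 4) :=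
  ![{(0,2),(1,2),(2,0),(2,1),(2,3),(3,2)},
    {(0,3),(1,3),(2,0),(2,1),(2,2),(3,3)},
    {(0,0),(1,0),(2,1),(2,2),(2,3),(3,0)},
    {(0,1),(1,1),(2,0),(2,2),(2,3),(3,1)},
    {(0,2),(1,2),(2,2),(3,0),(3,1),(3,3)},
    {(0,3),(1,3),(2,3),(3,0),(3,1),(3,2)},
    {(0,0),(1,0),(2,0),(3,1),(3,2),(3,3)},
    {(0,1),(1,1),(2,1),(3,0),(3,2),(3,3)},
    {(0,0),(0,1),(0,3),(1,2),(2,2),(3,2)},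
    {(0,0),(0,1),(0,2),(1,3),(2,3),(3,3)},
    {(0,1),(0,2),(0,3),(1,0),(2,0),(3,0)},
    {(0,0),(0,2),(0,3),(1,1),(2,1),(3,1)},
    {(0,2),(1,0),(1,1),(1,3),(2,2),(3,2)},
    {(0,3),(1,0),(1,1),(1,2),(2,3),(3,3)},
    {(0,0),(1,1),(1,2),(1,3),(2,0),(3,0)},
    {(0,1),(1,0),(1,2),(1,3),(2,1),(3,1)}]

/-! Every entry of `P` is `±1/2`, and column `j` of `P` has a single negative entry, in row
`negRow j`. Hence `P2 r c < 0` exactly when one, but not both, of `r.1 = negRow c.1` and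
`r.2 = negRow c.2` holds: the negative rows of column `c` form the cross through
`(negRow c.1, negRow c.2)` with its centre removed, `3 + 3 = 6` cells, and these 16 crosses are
the sets `S i`. -/

def negRow : Fin 4 → Fin 4 := ![2, 3, 0, 1]

lemma P_neg_iff (i j : Fin 4) : P i j < 0 ↔ i = negRow j := by
  fin_cases i <;> fin_cases j <;> norm_num [P, negRow] <;> decide

lemma P_ne_zero (i j : Fin 4) : P i j ≠ 0 := by
  fin_cases i <;> fin_cases j <;> norm_num [P]

lemma mul_neg_iff_xor {α : Type*} [Ring α] [LinearOrder α] [IsStrictOrderedRing α] {a b : α}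
    (ha : a ≠ 0) (hb : b ≠ 0) : a * b < 0 ↔ Xor (a < 0) (b < 0) := by
  rcases ha.lt_or_gt with ha | ha <;> rcases hb.lt_or_gt with hb | hb <;>
    simp [mul_neg_iff, ha, hb, ha.not_gt, hb.not_gt, Xor]

def cross (c : Fin 4 × Fin 4) : Finset (Fin 4 × Fin 4) :=
  univ.filter fun r => Xor (r.1 = negRow c.1) (r.2 = negRow c.2)

lemma negRows_eq_cross (c : Fin 4 × Fin 4) : negRows c = cross c := by
  ext r
  simp only [negRows, cross, P2, mem_filter, mem_univ, true_and,
    mul_neg_iff_xor (P_ne_zero _ _) (P_ne_zero _ _), P_neg_iff]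

/-- The negative-row set of every column of `P^{⊗2}` is one of the 16 sets
`S₀,…,S₁₅`, and exactly 16 distinct 6-element subsets arise this way. -/
theorem negRows_eq_S :
    (∀ c : Fin 4 × Fin 4, ∃ i : Fin 16, negRows c = S i) ∧
    (univ.image negRows = univ.image S) ∧
    (univ.image negRows).card = 16 ∧
    (∀ i : Fin 16, (S i).card = 6) := by
  rw [show negRows = cross from funext negRows_eq_cross]
  refine ⟨?_, ?_, ?_, ?_⟩ <;> decide
end
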